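/- The element b⁴·c²·(a² + c²) of S lies in the ideal J; that is, π(b⁴·c²·a² + b⁴·c⁴) = 0 in N. -/

import Mathlib

/-!
Modulo `J` we have `b c = a d` (in characteristic 2) and `b d (b + d) = 0`. The first relation
gives `b c (a + c) = a c (b + d)`, so `b⁴ c² (a + c)² = (a b c (b + d))²`; trading one more `b c`
for `a d` exhibits the factor `b d (b + d)`. Finally `a² + c² = (a + c)²` in characteristic 2.
-/

open MvPolynomial

/-- `S = ℤ/2[a,b,c,d] ≅ H^*(BSO(3)²; ℤ/2)` with `a = w₂'`, `b = w₃'`, `c = w₂''`, `d = w₃''`. -/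
noncomputable abbrev S : Type := MvPolynomial (Fin 4) (ZMod 2)

noncomputable def a : S := X 0
noncomputable def b : S := X 1
noncomputable def c : S := X 2
noncomputable def d : S := X 3

/-- The ideal `J = (a·d + c·b, b·d² + b²·d)` of relations. -/
noncomputable def J : Ideal S := Ideal.span {a * d + c * b, b * d ^ 2 + b ^ 2 * d}

/-- `N = S ⧸ J`, the bottom line of the `E_∞`-term. -/
noncomputable abbrev N : Type := S ⧸ J

/-- The quotient map `π : S → N`. -/
noncomputable def π : S →+* N := Ideal.Quotient.mk J

theorem pow_four_mul_sq_mul_add_sq_eq_zero {R : Type*} [CommRing R] {a b c d : R}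
    (hbc : b * c = a * d) (hbd : b * d * (b + d) = 0) :
    b ^ 4 * c ^ 2 * (a + c) ^ 2 = 0 := by
  have key : b * c * (a + c) = a * c * (b + d) := by linear_combination c * hbc
  calc b ^ 4 * c ^ 2 * (a + c) ^ 2 = (b * (b * c * (a + c))) ^ 2 := by ring
    _ = (a * b * c * (b + d)) ^ 2 := by rw [key]; ring
    _ = a ^ 3 * c * (b + d) * (b * d * (b + d)) := by
      linear_combination a ^ 2 * b * c * (b + d) ^ 2 * hbc
    _ = 0 := by rw [hbd, mul_zero]

theorem stmt_12 : b ^ 4 * c ^ 2 * (a ^ 2 + c ^ 2) ∈ J := by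
  have hbc : π b * π c = π a * π d := by
    rw [← map_mul, ← map_mul, π, Ideal.Quotient.eq, CharTwo.sub_eq_add, add_comm, mul_comm b]
    exact Ideal.subset_span (Set.mem_insert _ _)
  have hbd : π b * π d * (π b + π d) = 0 := by
    have hmem : b * d * (b + d) ∈ J := by
      rw [show b * d * (b + d) = b * d ^ 2 + b ^ 2 * d by ring]
      exact Ideal.subset_span (Set.mem_insert_of_mem _ rfl)
    simpa only [π, map_mul, map_add] using Ideal.Quotient.eq_zero_iff_mem.2 hmem
  rw [← CharTwo.add_sq, ← Ideal.Quotient.eq_zero_iff_mem]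
  simpa only [π, map_mul, map_pow, map_add] using pow_four_mul_sq_mul_add_sq_eq_zero hbc hbd
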